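/- Let φ₁,…,φ_m : L → L' and ψ₁,…,ψ_m : N → N' be simplicial maps, and suppose β : N → L and α : L' → N' are strong equivalences with α ∘ φ_i ∘ β ∼ ψ_i for all i. Then SD(φ₁,…,φ_m) = SD(ψ₁,…,ψ_m). -/

import Mathlib

noncomputable section

/-- An abstract simplicial complex on a vertex type `V`. -/
structure ASC (V : Type) where
  faces : Set (Finset V)
  nonempty_of_mem : ∀ ⦃σ⦄, σ ∈ faces → σ.Nonempty
  down_closed : ∀ ⦃σ⦄, σ ∈ faces → ∀ ⦃τ⦄, τ ⊆ σ → τ.Nonempty → τ ∈ faces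

/-- A simplicial map between abstract simplicial complexes. -/
structure SMap {V W : Type} [DecidableEq W] (K : ASC V) (L : ASC W) where
  toFun : V → W
  map_faces : ∀ ⦃σ⦄, σ ∈ K.faces → σ.image toFun ∈ L.faces

/-- The identity simplicial map. -/
def SMap.id {V : Type} [DecidableEq V] (K : ASC V) : SMap K K :=
  ⟨fun v => v, fun σ hσ => by simpa using hσ⟩

/-- Composition of simplicial maps. -/
def SMap.comp {U V W : Type} [DecidableEq V] [DecidableEq W]
    {K : ASC U} {L : ASC V} {M : ASC W}
    (g : SMap L M) (f : SMap K L) : SMap K M :=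
  ⟨g.toFun ∘ f.toFun, fun σ hσ => by
    rw [show σ.image (g.toFun ∘ f.toFun) = (σ.image f.toFun).image g.toFun by
      simp [Finset.image_image]]
    exact g.map_faces (f.map_faces hσ)⟩

/-- Two simplicial maps are contiguous if the union of the images of every
simplex is a simplex of the codomain. -/
def Contiguous {V W : Type} [DecidableEq W] {K : ASC V} {L : ASC W}
    (f g : SMap K L) : Prop :=
  ∀ ⦃σ⦄, σ ∈ K.faces → σ.image f.toFun ∪ σ.image g.toFun ∈ L.faces

/-- Two simplicial maps are in the same contiguity class if they are joined by
a finite chain of pairwise contiguous simplicial maps. -/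
def ContigClass {V W : Type} [DecidableEq W] {K : ASC V} {L : ASC W}
    (f g : SMap K L) : Prop :=
  Relation.ReflTransGen Contiguous f g

/-- `N` is a subcomplex of `K`. -/
def IsSubcomplex {V : Type} (N K : ASC V) : Prop :=
  N.faces ⊆ K.faces

/-- Restriction of a simplicial map to a subcomplex. -/
def SMap.restrict {V W : Type} [DecidableEq W] {N K : ASC V} {L : ASC W}
    (h : IsSubcomplex N K) (f : SMap K L) : SMap N L :=
  ⟨f.toFun, fun _ hσ => f.map_faces (h hσ)⟩

/-- `SDcover φ n` : the domain is covered by `n+1` subcomplexes on each of which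
all restrictions of the maps `φ i` are pairwise in the same contiguity class. -/
def SDcover {V W : Type} [DecidableEq W] {K : ASC V} {L : ASC W} {m : ℕ}
    (φ : Fin m → SMap K L) (n : ℕ) : Prop :=
  ∃ (Ls : Fin (n + 1) → ASC V) (h : ∀ k, IsSubcomplex (Ls k) K),
    (∀ σ ∈ K.faces, ∃ k, σ ∈ (Ls k).faces) ∧
    ∀ k i j, ContigClass (SMap.restrict (h k) (φ i)) (SMap.restrict (h k) (φ j))

/-- The higher contiguity distance `SD(φ₁, …, φ_m)` as a value in `ℕ∞`. -/
def SD {V W : Type} [DecidableEq W] {K : ASC V} {L : ASC W} {m : ℕ}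
    (φ : Fin m → SMap K L) : ℕ∞ :=
  sInf {N : ℕ∞ | ∃ n : ℕ, N = n ∧ SDcover φ n}

/-- The `n`-fold categorical power of a simplicial complex. -/
def ASC.pow {V : Type} [DecidableEq V] (K : ASC V) (n : ℕ) : ASC (Fin n → V) where
  faces := {σ | σ.Nonempty ∧ ∀ i, σ.image (fun v => v i) ∈ K.faces}
  nonempty_of_mem := fun _ hσ => hσ.1
  down_closed := fun σ hσ τ hτσ hτ =>
    ⟨hτ, fun i => K.down_closed (hσ.2 i)
      (Finset.image_subset_image (f := fun v => v i) hτσ) (hτ.image _)⟩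

/-- The `i`-th projection from the `n`-fold categorical power. -/
def ASC.proj {V : Type} [DecidableEq V] (K : ASC V) (n : ℕ) (i : Fin n) :
    SMap (K.pow n) K :=
  ⟨fun v => v i, fun _ hσ => hσ.2 i⟩

/-- The power of a simplicial map. -/
def SMap.pow {V W : Type} [DecidableEq V] [DecidableEq W] {K : ASC V} {L : ASC W}
    (f : SMap K L) (n : ℕ) : SMap (K.pow n) (L.pow n) :=
  ⟨fun v i => f.toFun (v i), fun σ hσ => by
    obtain ⟨h1, h2⟩ := hσ
    refine ⟨h1.image _, fun i => ?_⟩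
    have hf := f.map_faces (h2 i)
    rw [Finset.image_image] at hf ⊢
    exact hf⟩

/-- The higher discrete topological complexity `TC_n(K)`. -/
def TCn {V : Type} [DecidableEq V] (K : ASC V) (n : ℕ) : ℕ∞ :=
  SD (fun i : Fin n => K.proj n i)

/-- The higher discrete topological complexity of a simplicial map. -/
def TCnMap {V W : Type} [DecidableEq V] [DecidableEq W] {K : ASC V} {L : ASC W}
    (φ : SMap K L) (n : ℕ) : ℕ∞ :=
  SD (fun i : Fin n => φ.comp (K.proj n i))

/-- The binary categorical product of two simplicial complexes. -/
def ASC.prod {V W : Type} [DecidableEq V] [DecidableEq W]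
    (K : ASC V) (L : ASC W) : ASC (V × W) where
  faces := {σ | σ.Nonempty ∧ σ.image Prod.fst ∈ K.faces ∧ σ.image Prod.snd ∈ L.faces}
  nonempty_of_mem := fun _ hσ => hσ.1
  down_closed := fun σ hσ τ hτσ hτ =>
    ⟨hτ, K.down_closed hσ.2.1 (Finset.image_subset_image hτσ) (hτ.image _),
      L.down_closed hσ.2.2 (Finset.image_subset_image hτσ) (hτ.image _)⟩

/-- The path complex `I_m` : vertices `0, …, m`, maximal simplices `{i, i+1}`. -/
def pathComplex (m : ℕ) : ASC (Fin (m + 1)) where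
  faces := {σ | σ.Nonempty ∧ ∃ i : ℕ, ∀ j ∈ σ, (j : ℕ) = i ∨ (j : ℕ) = i + 1}
  nonempty_of_mem := fun _ hσ => hσ.1
  down_closed := fun _ hσ _ hτσ hτ =>
    ⟨hτ, hσ.2.imp fun _ h => fun j hj => h j (hτσ hj)⟩

/-- Two simplicial complexes have the same strong homotopy type. -/
def StrongHomotopyType {V W : Type} [DecidableEq V] [DecidableEq W]
    (K : ASC V) (L : ASC W) : Prop :=
  ∃ (f : SMap K L) (g : SMap L K),
    ContigClass (g.comp f) (SMap.id K) ∧ ContigClass (f.comp g) (SMap.id L)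

/-- The one-point simplicial complex. -/
def ptASC : ASC Unit where
  faces := {σ | σ.Nonempty}
  nonempty_of_mem := fun _ hσ => hσ
  down_closed := fun _ _ _ _ hτ => hτ

/-- A simplicial complex is strongly collapsible if it has the strong homotopy
type of a point. -/
def StronglyCollapsible {V : Type} [DecidableEq V] (K : ASC V) : Prop :=
  StrongHomotopyType K ptASC

/-- The inclusion `N → N × I_m` at level `0`. -/
def inclZero {V : Type} [DecidableEq V] (N : ASC V) (m : ℕ) :
    SMap N (N.prod (pathComplex m)) :=
  ⟨fun v => (v, 0), fun σ hσ => by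
    refine ⟨(N.nonempty_of_mem hσ).image _, ?_, ?_⟩
    · rw [Finset.image_image, show (Prod.fst ∘ fun v : V => (v, (0 : Fin (m + 1))))
        = fun v => v from rfl, Finset.image_id']
      exact hσ
    · rw [Finset.image_image]
      refine ⟨(N.nonempty_of_mem hσ).image _, 0, fun j hj => ?_⟩
      simp only [Finset.mem_image, Function.comp] at hj
      obtain ⟨v, -, rfl⟩ := hj
      simp⟩

/-- A simplicial finite-fibration : the homotopy lifting property with respect
to simplicial homotopies `N × I_m → L'` with `N` finite. -/
def IsFiniteFibration {V W : Type} [DecidableEq V] [DecidableEq W]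
    {K : ASC V} {L : ASC W} (φ : SMap K L) : Prop :=
  ∀ (U : Type) [Fintype U] [DecidableEq U] (N : ASC U) (m : ℕ) (g : SMap N K)
    (G : SMap (N.prod (pathComplex m)) L),
    (∀ v, G.toFun (v, 0) = φ.toFun (g.toFun v)) →
    ∃ Gt : SMap (N.prod (pathComplex m)) K,
      (∀ v, Gt.toFun (v, 0) = g.toFun v) ∧ (∀ x, φ.toFun (Gt.toFun x) = G.toFun x)

/-- The constant simplicial map at a vertex `v₀` of `L`. -/
def constMap {V W : Type} [DecidableEq W] (K : ASC V) {L : ASC W} {v₀ : W}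
    (hv₀ : {v₀} ∈ L.faces) : SMap K L :=
  ⟨fun _ => v₀, fun σ hσ => by
    have hsub : σ.image (fun _ => v₀) ⊆ {v₀} := by
      intro x hx
      simp only [Finset.mem_image] at hx
      obtain ⟨v, -, rfl⟩ := hx
      simp
    exact L.down_closed hv₀ hsub ((K.nonempty_of_mem hσ).image _)⟩

/-- A simplicial map is a strong equivalence if it admits an inverse up to
contiguity class. -/
def IsStrongEquiv {V W : Type} [DecidableEq V] [DecidableEq W]
    {K : ASC V} {L : ASC W} (f : SMap K L) : Prop :=
  ∃ g : SMap L K,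
    ContigClass (g.comp f) (SMap.id K) ∧ ContigClass (f.comp g) (SMap.id L)

/-!
Pulling a cover of `L` back along `β` gives a cover of `N`, and on each piece
`ψ_i ∼ α ∘ φ_i ∘ β ∼ α ∘ φ_j ∘ β ∼ ψ_j`, so `SD ψ ≤ SD φ`. Inverses `α'`, `β'` up to
contiguity give `α' ∘ ψ_i ∘ β' ∼ (α' ∘ α) ∘ φ_i ∘ (β ∘ β') ∼ φ_i`, so the same argument
with the roles of `φ` and `ψ` exchanged gives the reverse inequality.
-/

section Contiguity

theorem Contiguous.symm {V W : Type} [DecidableEq W] {K : ASC V} {L : ASC W} {f g : SMap K L}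
    (h : Contiguous f g) : Contiguous g f :=
  fun _ hσ => by rw [Finset.union_comm]; exact h hσ

theorem ContigClass.symm {V W : Type} [DecidableEq W] {K : ASC V} {L : ASC W} {f g : SMap K L}
    (h : ContigClass f g) : ContigClass g f :=
  Relation.ReflTransGen.mono (fun _ _ hc => Contiguous.symm hc) _ _
    (Relation.reflTransGen_swap.mpr h)

theorem ContigClass.trans {V W : Type} [DecidableEq W] {K : ASC V} {L : ASC W}
    {f g h : SMap K L} (hfg : ContigClass f g) (hgh : ContigClass g h) : ContigClass f h :=
  Relation.ReflTransGen.trans hfg hgh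

variable {U V W : Type} [DecidableEq V] [DecidableEq W] {K : ASC U} {L : ASC V} {M : ASC W}

theorem Contiguous.comp_left {f g : SMap K L} (h : Contiguous f g) (e : SMap L M) :
    Contiguous (e.comp f) (e.comp g) := fun σ hσ => by
  simpa [SMap.comp, Finset.image_union, Finset.image_image] using e.map_faces (h hσ)

theorem Contiguous.comp_right {f g : SMap L M} (h : Contiguous f g) (e : SMap K L) :
    Contiguous (f.comp e) (g.comp e) := fun σ hσ => by
  simpa [SMap.comp, Finset.image_image] using h (e.map_faces hσ)

theorem ContigClass.comp_left {f g : SMap K L} (h : ContigClass f g) (e : SMap L M) :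
    ContigClass (e.comp f) (e.comp g) :=
  Relation.ReflTransGen.lift (p := Contiguous) (e.comp ·)
    (fun _ _ hc => Contiguous.comp_left hc e) _ _ h

theorem ContigClass.comp_right {f g : SMap L M} (h : ContigClass f g) (e : SMap K L) :
    ContigClass (f.comp e) (g.comp e) :=
  Relation.ReflTransGen.lift (p := Contiguous) (fun x : SMap L M => x.comp e)
    (fun _ _ hc => Contiguous.comp_right hc e) _ _ h

theorem ContigClass.restrict {N : ASC U} (hN : IsSubcomplex N K) {f g : SMap K L}
    (h : ContigClass f g) : ContigClass (f.restrict hN) (g.restrict hN) :=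
  Relation.ReflTransGen.lift (p := Contiguous) (fun x : SMap K L => x.restrict hN)
    (fun _ _ hc _ hσ => hc (hN hσ)) _ _ h

end Contiguity

def ASC.comap {V W : Type} [DecidableEq W] (Lk : ASC W) {N : ASC V} {L : ASC W}
    (f : SMap N L) : ASC V where
  faces := {σ | σ ∈ N.faces ∧ σ.image f.toFun ∈ Lk.faces}
  nonempty_of_mem := fun _ hσ => N.nonempty_of_mem hσ.1
  down_closed := fun _ hσ _ hτσ hτ =>
    ⟨N.down_closed hσ.1 hτσ hτ, Lk.down_closed hσ.2 (Finset.image_subset_image hτσ) (hτ.image _)⟩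

theorem ASC.comap_isSubcomplex {V W : Type} [DecidableEq W] (Lk : ASC W) {N : ASC V}
    {L : ASC W} (f : SMap N L) : IsSubcomplex (Lk.comap f) N :=
  fun _ hσ => hσ.1

def SMap.comapRestrict {V W : Type} [DecidableEq W] {N : ASC V} {L : ASC W} (f : SMap N L)
    (Lk : ASC W) : SMap (Lk.comap f) Lk :=
  ⟨f.toFun, fun _ hσ => hσ.2⟩

section Transfer

variable {VL VL' VN VN' : Type} [DecidableEq VL] [DecidableEq VL'] [DecidableEq VN']
  {L : ASC VL} {L' : ASC VL'} {N : ASC VN} {N' : ASC VN'} {m : ℕ}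
  {phi : Fin m → SMap L L'} {psi : Fin m → SMap N N'} {beta : SMap N L} {alpha : SMap L' N'}

theorem SDcover.of_contigClass_comp
    (hcomm : ∀ i, ContigClass (alpha.comp ((phi i).comp beta)) (psi i))
    {n : ℕ} (hcov : SDcover phi n) : SDcover psi n := by
  obtain ⟨Ls, hLs, hcover, hcontig⟩ := hcov
  refine ⟨fun k => (Ls k).comap beta, fun k => (Ls k).comap_isSubcomplex beta,
    fun σ hσ => (hcover _ (beta.map_faces hσ)).imp fun _ hk => ⟨hσ, hk⟩, fun k i j => ?_⟩
  have hpiece : ∀ i, ContigClass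
      (alpha.comp (((phi i).restrict (hLs k)).comp (beta.comapRestrict (Ls k))))
      ((psi i).restrict ((Ls k).comap_isSubcomplex beta)) :=
    fun i => (hcomm i).restrict ((Ls k).comap_isSubcomplex beta)
  exact (hpiece i).symm.trans
    ((((hcontig k i j).comp_right _).comp_left alpha).trans (hpiece j))

theorem SD_le_of_contigClass_comp
    (hcomm : ∀ i, ContigClass (alpha.comp ((phi i).comp beta)) (psi i)) :
    SD psi ≤ SD phi :=
  sInf_le_sInf fun _ ⟨n, hn, hcov⟩ => ⟨n, hn, hcov.of_contigClass_comp hcomm⟩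

theorem contigClass_comp_of_leftInverse_of_rightInverse [DecidableEq VN]
    (hcomm : ∀ i, ContigClass (alpha.comp ((phi i).comp beta)) (psi i))
    {alpha' : SMap N' L'} {beta' : SMap L N}
    (halpha : ContigClass (alpha'.comp alpha) (SMap.id L'))
    (hbeta : ContigClass (beta.comp beta') (SMap.id L)) (i : Fin m) :
    ContigClass (alpha'.comp ((psi i).comp beta')) (phi i) :=
  (((hcomm i).symm.comp_right beta').comp_left alpha').trans
    (((hbeta.comp_left (phi i)).comp_left (alpha'.comp alpha)).trans
      (halpha.comp_right ((phi i).comp (SMap.id L))))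

end Transfer

/-- if `β : N → L` and `α : L' → N'` are strong equivalences and
`α ∘ φ_i ∘ β ∼ ψ_i` for all `i`, then `SD(φ₁,…,φ_m) = SD(ψ₁,…,ψ_m)`. -/
theorem SD_eq_of_strong_equivalences
    {VL VL' VN VN' : Type} [DecidableEq VL] [DecidableEq VL']
    [DecidableEq VN] [DecidableEq VN']
    {L : ASC VL} {L' : ASC VL'} {N : ASC VN} {N' : ASC VN'} {m : ℕ}
    (phi : Fin m → SMap L L') (psi : Fin m → SMap N N')
    (beta : SMap N L) (alpha : SMap L' N')
    (hbeta : IsStrongEquiv beta) (halpha : IsStrongEquiv alpha)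
    (hcomm : ∀ i, ContigClass (alpha.comp ((phi i).comp beta)) (psi i)) :
    SD phi = SD psi := by
  obtain ⟨beta', -, hbeta_beta'⟩ := hbeta
  obtain ⟨alpha', halpha'_alpha, -⟩ := halpha
  exact le_antisymm
    (SD_le_of_contigClass_comp
      (contigClass_comp_of_leftInverse_of_rightInverse hcomm halpha'_alpha hbeta_beta'))
    (SD_le_of_contigClass_comp hcomm)
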